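/- Completeness with min-space countermodels: let T be a finite theory and Φ a graded implication. If T does not prove Φ in the calculus LAE, then there exist a model for LAEq whose underlying quasimetric space (W,q) is a min-space and an evaluation v into this model such that v satisfies every element of T but does not satisfy Φ. -/

import Mathlib

open scoped ENNReal

/-- A quasimetric on `W`: `q v w = 0` iff `v = w`, and the triangle inequality holds. -/
structure Quasimetric (W : Type*) where
  q : W → W → ℝ≥0∞
  eq_zero_iff : ∀ v w, q v w = 0 ↔ v = w
  triangle : ∀ v w x, q v x ≤ q v w + q w x

/-- The distance of a point from a set: `inf_{b ∈ B} q a b` (equal to `∞` for `B = ∅`). -/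
noncomputable def Quasimetric.distSet {W : Type*} (Q : Quasimetric W) (a : W) (B : Set W) : ℝ≥0∞ :=
  ⨅ b ∈ B, Q.q a b

/-- The `d`-neighbourhood of `B`. -/
def Quasimetric.nbhd {W : Type*} (Q : Quasimetric W) (d : ℝ≥0∞) (B : Set W) : Set W :=
  { a | Q.distSet a B ≤ d }

/-- The Hausdorff quasidistance: `sup_{a ∈ A} q(a, B)` (equal to `0` for `A = ∅`). -/
noncomputable def Quasimetric.hdist {W : Type*} (Q : Quasimetric W) (A B : Set W) : ℝ≥0∞ :=
  ⨆ a ∈ A, Q.distSet a B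

/-- A min-space: the distance of a point from a nonempty set is attained. -/
def Quasimetric.IsMinSpace {W : Type*} (Q : Quasimetric W) : Prop :=
  ∀ (a : W) (B : Set W), B.Nonempty → ∃ b ∈ B, Q.distSet a B = Q.q a b

/-- Boolean (propositional) formulas over countably many variables. -/
inductive BForm : Type
  | var : ℕ → BForm
  | bot : BForm
  | top : BForm
  | and : BForm → BForm → BForm
  | or : BForm → BForm → BForm
  | not : BForm → BForm

/-- Classical truth-value evaluation of a Boolean formula. -/
def BForm.eval (v : ℕ → Bool) : BForm → Bool
  | .var n => v n
  | .bot => false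
  | .top => true
  | .and a b => a.eval v && b.eval v
  | .or a b => a.eval v || b.eval v
  | .not a => !(a.eval v)

/-- The abbreviation `a → b`. -/
def BForm.imp (a b : BForm) : BForm := .or (.not a) b

/-- A formula is a CPL tautology if it is true under every assignment. -/
def BForm.Taut (a : BForm) : Prop := ∀ v : ℕ → Bool, a.eval v = true

/-- A graded implication `α ⟹_d β` with degree `d ∈ ℝ⁺ = [0,∞)`. -/
structure GradedImp : Type where
  lhs : BForm
  deg : NNReal
  rhs : BForm

/-- Derivability in the calculus LAE from a theory `T`. -/
inductive Derives (T : Set GradedImp) : GradedImp → Prop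
  | ax {Φ : GradedImp} : Φ ∈ T → Derives T Φ
  | r1 (α β : BForm) : (α.imp β).Taut → Derives T ⟨α, 0, β⟩
  | r2 {α β : BForm} (γ : BForm) :
      Derives T ⟨α, 0, β⟩ → Derives T ⟨α.and γ, 0, β.and γ⟩
  | r3 {α β : BForm} {c : NNReal} (d : NNReal) :
      c ≤ d → Derives T ⟨α, c, β⟩ → Derives T ⟨α, d, β⟩
  | r4 {α : BForm} {c : NNReal} :
      Derives T ⟨α, c, .bot⟩ → Derives T ⟨α, 0, .bot⟩
  | r5 {α β γ : BForm} {c : NNReal} :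
      Derives T ⟨α, c, γ⟩ → Derives T ⟨β, c, γ⟩ → Derives T ⟨α.or β, c, γ⟩
  | r6 {α β γ : BForm} {c d : NNReal} :
      Derives T ⟨α, c, β⟩ → Derives T ⟨β, d, γ⟩ → Derives T ⟨α, c + d, γ⟩

/-- A model for LAEq: a Boolean algebra of subsets of a quasimetric space,
closed under the neighbourhood operators `U_d` for `d ∈ ℝ⁺`. -/
structure LAEModel (W : Type) where
  Q : Quasimetric W
  carrier : Set (Set W)
  empty_mem : ∅ ∈ carrier
  univ_mem : Set.univ ∈ carrier
  inter_mem : ∀ A ∈ carrier, ∀ B ∈ carrier, A ∩ B ∈ carrier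
  union_mem : ∀ A ∈ carrier, ∀ B ∈ carrier, A ∪ B ∈ carrier
  compl_mem : ∀ A ∈ carrier, Aᶜ ∈ carrier
  nbhd_mem : ∀ A ∈ carrier, ∀ d : NNReal, Q.nbhd (d : ℝ≥0∞) A ∈ carrier

/-- An evaluation of the Boolean formulas in a model, in the sense of
classical propositional logic. -/
structure Evaluation {W : Type} (M : LAEModel W) where
  v : BForm → Set W
  mem_carrier : ∀ α : BForm, v α ∈ M.carrier
  map_and : ∀ α β : BForm, v (α.and β) = v α ∩ v β
  map_or : ∀ α β : BForm, v (α.or β) = v α ∪ v β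
  map_not : ∀ α : BForm, v (α.not) = (v α)ᶜ
  map_bot : v .bot = ∅
  map_top : v .top = Set.univ

/-- An evaluation satisfies `α ⟹_d β` if `v(α) ⊆ U_d(v(β))`. -/
def Satisfies {W : Type} {M : LAEModel W} (e : Evaluation M) (Φ : GradedImp) : Prop :=
  e.v Φ.lhs ⊆ M.Q.nbhd (Φ.deg : ℝ≥0∞) (e.v Φ.rhs)

/-- Semantic entailment in LAEq: every evaluation into any model satisfying
all elements of `T` also satisfies `Φ`. -/
def SemEntails (T : Set GradedImp) (Φ : GradedImp) : Prop :=
  ∀ (W : Type) (_ : Nonempty W) (M : LAEModel W) (e : Evaluation M),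
    (∀ Ψ ∈ T, Satisfies e Ψ) → Satisfies e Φ

/-!
Fix a finite set `V` of variables containing those of `T` and `Φ = α₀ ⟹_{d₀} β₀`. The worlds
of the countermodel are the assignments `a` on `V` whose characteristic formula `χ_a` is
consistent (`T ⊬ χ_a ⟹_0 ⊥`). Because `T` is finite, derivable degrees lie in a well-ordered
additive monoid, so `g(a) := min {c | T ⊢ χ_a ⟹_c β₀}` is attained whenever it is finite.
The quasimetric `q(a, b) = max(ε, g(a) - g(b))` for `a ≠ b`, with `ε` the least positive degree
of `T`, lets a world satisfying the premise of an axiom `α ⟹_d β` reach, within distance `d`, the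
world satisfying `β` of largest `g`; and a world `a ⊨ α₀` with `T ⊬ χ_a ⟹_{d₀} β₀` has
`g(a) > d₀` while every world satisfying `β₀` has `g = 0`.
-/

namespace BForm

def vars : BForm → Finset ℕ
  | var n => {n}
  | bot | top => ∅
  | and a b | or a b => a.vars ∪ b.vars
  | not a => a.vars

theorem eval_congr {f g : ℕ → Bool} {α : BForm} (h : ∀ n ∈ α.vars, f n = g n) :
    α.eval f = α.eval g := by
  induction α with
  | var n => exact h n (by simp [vars])
  | bot | top => rfl
  | and a b iha ihb | or a b iha ihb =>
    simp only [vars, Finset.mem_union] at h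
    simp only [eval, iha fun n hn => h n (.inl hn), ihb fun n hn => h n (.inr hn)]
  | not a ih => simp only [eval, ih h]

theorem taut_imp_of_eval {α β : BForm} (h : ∀ f, α.eval f = true → β.eval f = true) :
    (α.imp β).Taut := fun f => by
  cases hα : α.eval f <;> simp [imp, eval, hα, h f]

def disj : List BForm → BForm
  | [] => bot
  | φ :: l => or φ (disj l)

def conj : List BForm → BForm
  | [] => top
  | φ :: l => and φ (conj l)

theorem eval_disj (f : ℕ → Bool) (l : List BForm) :
    (disj l).eval f = true ↔ ∃ φ ∈ l, φ.eval f = true := by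
  induction l <;> simp [disj, eval, *]

theorem eval_conj (f : ℕ → Bool) (l : List BForm) :
    (conj l).eval f = true ↔ ∀ φ ∈ l, φ.eval f = true := by
  induction l <;> simp [conj, eval, *]

def lit (n : ℕ) (b : Bool) : BForm := bif b then var n else not (var n)

theorem eval_lit {f : ℕ → Bool} {n : ℕ} {b : Bool} : (lit n b).eval f = true ↔ f n = b := by
  cases b <;> simp [lit, eval]

variable {V : Finset ℕ}

def extend (a : V → Bool) (n : ℕ) : Bool := if h : n ∈ V then a ⟨n, h⟩ else false

noncomputable def charFormula (a : V → Bool) : BForm :=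
  conj (V.attach.toList.map fun n : V => lit n (a n))

theorem eval_charFormula {a : V → Bool} {f : ℕ → Bool} :
    (charFormula a).eval f = true ↔ ∀ n : V, f n = a n := by
  simp only [charFormula, eval_conj, List.mem_map, Finset.mem_toList, Finset.mem_attach,
    true_and, forall_exists_index, forall_apply_eq_imp_iff, eval_lit]

theorem eval_eq_of_eval_charFormula {a : V → Bool} {f : ℕ → Bool} {α : BForm}
    (hv : α.vars ⊆ V) (hf : (charFormula a).eval f = true) : α.eval f = α.eval (extend a) :=
  eval_congr fun n hn => by rw [extend, dif_pos (hv hn), eval_charFormula.1 hf ⟨n, hv hn⟩]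

end BForm

def GradedImp.vars (Ψ : GradedImp) : Finset ℕ := Ψ.lhs.vars ∪ Ψ.rhs.vars

open BForm

namespace Derives

variable {T : Set GradedImp} {α β γ δ : BForm} {c : NNReal}

theorem of_eval_imp (c : NNReal) (h : ∀ f, α.eval f = true → β.eval f = true) :
    Derives T ⟨α, c, β⟩ :=
  r3 c zero_le (r1 α β (taut_imp_of_eval h))

theorem zero_trans (h₁ : Derives T ⟨α, 0, β⟩) (h₂ : Derives T ⟨β, c, γ⟩) :
    Derives T ⟨α, c, γ⟩ := by
  simpa using r6 h₁ h₂

theorem trans_zero (h₁ : Derives T ⟨α, c, β⟩) (h₂ : Derives T ⟨β, 0, γ⟩) :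
    Derives T ⟨α, c, γ⟩ := by
  simpa using r6 h₁ h₂

theorem of_bot (h : Derives T ⟨α, 0, .bot⟩) (c : NNReal) (δ : BForm) : Derives T ⟨α, c, δ⟩ :=
  zero_trans h (of_eval_imp c fun f hf => by simp [eval] at hf)

theorem disj {l : List BForm} (h : ∀ φ ∈ l, Derives T ⟨φ, c, δ⟩) :
    Derives T ⟨BForm.disj l, c, δ⟩ := by
  induction l with
  | nil => exact of_eval_imp c fun f hf => by simp [BForm.disj, eval] at hf
  | cons φ l ih => exact r5 (h φ (by simp)) (ih fun ψ hψ => h ψ (by simp [hψ]))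

/-- There is no rule introducing conjunctions: pass through `α ∧ α`, `β ∧ α`, `α ∧ β`, `¬β ∧ β`
using `R2` twice. -/
theorem bot_of_and_not (h₁ : Derives T ⟨α, 0, β⟩) (h₂ : Derives T ⟨α, 0, β.not⟩) :
    Derives T ⟨α, 0, .bot⟩ :=
  zero_trans (of_eval_imp 0 fun f hf => by simp [eval, hf]) <|
    zero_trans (r2 α h₁) <|
    zero_trans (of_eval_imp 0 fun f hf => by simp_all [eval]) <|
    zero_trans (r2 β h₂) (of_eval_imp 0 fun f hf => by simp [eval] at hf)

variable {V : Finset ℕ}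

theorem charFormula_of_eval {a : V → Bool} (hv : α.vars ⊆ V) (ha : α.eval (extend a) = true) :
    Derives T ⟨charFormula a, 0, α⟩ :=
  of_eval_imp 0 fun _ hf => (eval_eq_of_eval_charFormula hv hf).trans ha

/-- `α ⟹_0 ⋁_{a ⊨ α} χ_a`, then `R5`. -/
theorem of_forall_charFormula (hv : α.vars ⊆ V)
    (h : ∀ a : V → Bool, α.eval (extend a) = true → Derives T ⟨charFormula a, c, δ⟩) :
    Derives T ⟨α, c, δ⟩ := by
  classical
  let sat := Finset.univ.filter fun a : V → Bool => α.eval (extend a) = true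
  refine zero_trans (β := BForm.disj (sat.toList.map charFormula)) ?_ (disj ?_)
  · refine of_eval_imp 0 fun f hf => (eval_disj f _).2 ?_
    let a : V → Bool := fun n => f n
    have ha : (charFormula a).eval f = true := eval_charFormula.2 fun _ => rfl
    refine ⟨charFormula a, List.mem_map_of_mem ?_, ha⟩
    simpa [sat, ← eval_eq_of_eval_charFormula hv ha] using hf
  · intro φ hφ
    obtain ⟨a, ha, rfl⟩ := List.mem_map.1 hφ
    exact h a (by simpa [sat] using ha)

theorem exists_deg_mem_closure_le {Ψ : GradedImp} (h : Derives T Ψ) :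
    ∃ c ∈ AddSubmonoid.closure (GradedImp.deg '' T), c ≤ Ψ.deg ∧ Derives T ⟨Ψ.lhs, c, Ψ.rhs⟩ := by
  induction h with
  | @ax Ψ hΨ => exact ⟨Ψ.deg, AddSubmonoid.subset_closure ⟨Ψ, hΨ, rfl⟩, le_rfl, ax hΨ⟩
  | r1 α β ht => exact ⟨0, zero_mem _, le_rfl, r1 α β ht⟩
  | r2 γ h _ => exact ⟨0, zero_mem _, le_rfl, r2 γ h⟩
  | r3 d hcd _ ih =>
    obtain ⟨c, hc, hle, hd⟩ := ih
    exact ⟨c, hc, hle.trans hcd, hd⟩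
  | r4 h _ => exact ⟨0, zero_mem _, le_rfl, r4 h⟩
  | r5 _ _ ih₁ ih₂ =>
    obtain ⟨c₁, hc₁, hle₁, hd₁⟩ := ih₁
    obtain ⟨c₂, hc₂, hle₂, hd₂⟩ := ih₂
    refine ⟨max c₁ c₂, ?_, max_le hle₁ hle₂,
      r5 (r3 _ (le_max_left _ _) hd₁) (r3 _ (le_max_right _ _) hd₂)⟩
    rcases max_choice c₁ c₂ with hm | hm <;> rwa [hm]
  | r6 _ _ ih₁ ih₂ =>
    obtain ⟨c₁, hc₁, hle₁, hd₁⟩ := ih₁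
    obtain ⟨c₂, hc₂, hle₂, hd₂⟩ := ih₂
    exact ⟨c₁ + c₂, add_mem hc₁ hc₂, add_le_add hle₁ hle₂, r6 hd₁ hd₂⟩

/-- The additive monoid generated by finitely many nonnegative reals is well-ordered. -/
theorem exists_min_deg (hT : T.Finite) {c : NNReal} (h : Derives T ⟨α, c, β⟩) :
    ∃ m, Derives T ⟨α, m, β⟩ ∧ ∀ c', Derives T ⟨α, c', β⟩ → m ≤ c' := by
  let D := {c | c ∈ AddSubmonoid.closure (GradedImp.deg '' T) ∧ Derives T ⟨α, c, β⟩}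
  have hD : D.IsWF :=
    ((hT.image _).isPWO.addSubmonoid_closure fun _ _ => zero_le).isWF.mono fun _ hc => hc.1
  obtain ⟨c₀, hc₀, -, hd₀⟩ := exists_deg_mem_closure_le h
  have hne : D.Nonempty := ⟨c₀, hc₀, hd₀⟩
  refine ⟨hD.min hne, (hD.min_mem hne).2, fun c' hc' => ?_⟩
  obtain ⟨c'', hc'', hle, hd''⟩ := exists_deg_mem_closure_le hc'
  exact (hD.min_le hne ⟨hc'', hd''⟩).trans hle

end Derives

noncomputable def minDeg (T : Set GradedImp) (α β : BForm) : ℝ≥0∞ :=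
  ⨅ (c : NNReal) (_ : Derives T ⟨α, c, β⟩), (c : ℝ≥0∞)

section minDeg

variable {T : Set GradedImp} {α β δ : BForm}

theorem derives_iff_minDeg_le (hT : T.Finite) {c : NNReal} :
    Derives T ⟨α, c, β⟩ ↔ minDeg T α β ≤ c := by
  refine ⟨fun h => iInf₂_le c h, fun hle => ?_⟩
  by_cases hex : ∃ c', Derives T ⟨α, c', β⟩
  · obtain ⟨c', hc'⟩ := hex
    obtain ⟨m, hm, hmin⟩ := Derives.exists_min_deg hT hc'
    have : (m : ℝ≥0∞) ≤ minDeg T α β := le_iInf₂ fun c' hc' => by exact_mod_cast hmin c' hc'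
    exact Derives.r3 c (by exact_mod_cast this.trans hle) hm
  · have : minDeg T α β = ⊤ := top_unique <| le_iInf₂ fun c' hc' => (hex ⟨c', hc'⟩).elim
    simp [this] at hle

theorem minDeg_le_add_of_derives (hT : T.Finite) {d : NNReal} (h : Derives T ⟨α, d, β⟩) :
    minDeg T α δ ≤ d + minDeg T β δ := by
  cases hβ : minDeg T β δ with
  | top => simp
  | coe c =>
    rw [← ENNReal.coe_add, ← derives_iff_minDeg_le hT]
    exact Derives.r6 h ((derives_iff_minDeg_le hT).2 hβ.le)

end minDeg

namespace Quasimetric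

variable {W : Type*}

open Classical in
noncomputable def ofPotential (g : W → ℝ≥0∞) (ε : ℝ≥0∞) (hε : 0 < ε) : Quasimetric W where
  q u w := if u = w then 0 else max ε (g u - g w)
  eq_zero_iff u w := by
    by_cases huw : u = w
    · simp [huw]
    · simp [huw, hε.ne']
  triangle u v w := by
    by_cases huv : u = v
    · simp [huv]
    by_cases hvw : v = w
    · simp [hvw]
    by_cases huw : u = w
    · simp [huw]
    simp only [huv, hvw, huw, if_false]
    exact max_le ((le_max_left _ _).trans le_self_add)
      (tsub_le_tsub_add_tsub.trans (add_le_add (le_max_right _ _) (le_max_right _ _)))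

variable {g : W → ℝ≥0∞} {ε : ℝ≥0∞} {hε : 0 < ε}

theorem tsub_le_ofPotential (u w : W) : g u - g w ≤ (ofPotential g ε hε).q u w := by
  by_cases huw : u = w
  · simp [huw]
  · simp [ofPotential, huw]

theorem ofPotential_le {u w : W} {d : ℝ≥0∞} (hεd : ε ≤ d) (h : g u ≤ d + g w) :
    (ofPotential g ε hε).q u w ≤ d := by
  by_cases huw : u = w
  · simp [ofPotential, huw]
  · simpa [ofPotential, huw] using ⟨hεd, h⟩

theorem distSet_le_of_mem (Q : Quasimetric W) {a b : W} {B : Set W} {d : ℝ≥0∞} (hb : b ∈ B)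
    (h : Q.q a b ≤ d) : Q.distSet a B ≤ d :=
  iInf₂_le_of_le b hb h

theorem isMinSpace_of_finite [Finite W] (Q : Quasimetric W) : Q.IsMinSpace := fun a B hB => by
  obtain ⟨b, hb, hmin⟩ := B.exists_min_image (Q.q a) B.toFinite hB
  exact ⟨b, hb, le_antisymm (iInf₂_le b hb) (le_iInf₂ hmin)⟩

end Quasimetric

def LAEModel.full {W : Type} (Q : Quasimetric W) : LAEModel W where
  Q := Q
  carrier := Set.univ
  empty_mem := trivial
  univ_mem := trivial
  inter_mem _ _ _ _ := trivial
  union_mem _ _ _ _ := trivial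
  compl_mem _ _ := trivial
  nbhd_mem _ _ _ := trivial

def Evaluation.ofAssignment {W : Type} (Q : Quasimetric W) (σ : W → ℕ → Bool) :
    Evaluation (LAEModel.full Q) where
  v α := {w | α.eval (σ w) = true}
  mem_carrier _ := trivial
  map_and _ _ := by ext; simp [eval]
  map_or _ _ := by ext; simp [eval]
  map_not _ := by ext; simp [eval]
  map_bot := by ext; simp [eval]
  map_top := by ext; simp [eval]

def World (T : Set GradedImp) (V : Finset ℕ) : Type :=
  {a : V → Bool // ¬ Derives T ⟨charFormula a, 0, .bot⟩}

namespace World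

variable {T : Set GradedImp} {V : Finset ℕ} {α β δ : BForm} {d : NNReal}

instance : Finite (World T V) := Subtype.finite

noncomputable def potential (δ : BForm) (u : World T V) : ℝ≥0∞ := minDeg T (charFormula u.1) δ

open Derives

theorem exists_not_derives (hα : α.vars ⊆ V) (h : ¬ Derives T ⟨α, d, β⟩) :
    ∃ u : World T V, α.eval (extend u.1) = true ∧ ¬ Derives T ⟨charFormula u.1, d, β⟩ := by
  by_contra! hall
  refine h (of_forall_charFormula hα fun a ha => ?_)
  by_cases hc : Derives T ⟨charFormula a, 0, .bot⟩
  · exact of_bot hc d β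
  · exact hall ⟨a, hc⟩ ha

theorem eval_of_derives_zero (hα : α.vars ⊆ V) (hβ : β.vars ⊆ V) (h : Derives T ⟨α, 0, β⟩)
    (u : World T V) (hu : α.eval (extend u.1) = true) : β.eval (extend u.1) = true := by
  by_contra hnβ
  have hu' : β.not.eval (extend u.1) = true := by simpa [eval] using hnβ
  exact u.2 (bot_of_and_not (zero_trans (charFormula_of_eval hα hu) h)
    (charFormula_of_eval hβ hu'))

theorem minDeg_le_of_forall_world (hT : T.Finite) (hβ : β.vars ⊆ V) {c : ℝ≥0∞}
    (h : ∀ w : World T V, β.eval (extend w.1) = true → w.potential δ ≤ c) :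
    minDeg T β δ ≤ c := by
  cases c with
  | top => exact le_top
  | coe c =>
    rw [← derives_iff_minDeg_le hT]
    refine of_forall_charFormula hβ fun a ha => ?_
    by_cases hc : Derives T ⟨charFormula a, 0, .bot⟩
    · exact of_bot hc c δ
    · exact (derives_iff_minDeg_le hT).2 (h ⟨a, hc⟩ ha)

/-- The witness is a world satisfying `β` of largest potential. -/
theorem exists_potential_le_add (hT : T.Finite) (hα : α.vars ⊆ V) (hβ : β.vars ⊆ V)
    (h : Derives T ⟨α, d, β⟩) (u : World T V) (hu : α.eval (extend u.1) = true) :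
    ∃ w : World T V, β.eval (extend w.1) = true ∧ u.potential δ ≤ d + w.potential δ := by
  have hne : {w : World T V | β.eval (extend w.1) = true}.Nonempty := by
    by_contra! hemp
    refine u.2 (r4 (zero_trans (charFormula_of_eval hα hu) (trans_zero h ?_)))
    refine of_forall_charFormula hβ fun a ha => not_not.1 fun hc => ?_
    exact hemp.subset (show (⟨a, hc⟩ : World T V) ∈ _ from ha)
  obtain ⟨w, hw, hmax⟩ := Set.exists_max_image _ (potential δ) (Set.toFinite _) hne
  refine ⟨w, hw, ?_⟩
  calc u.potential δ ≤ 0 + minDeg T α δ := minDeg_le_add_of_derives hT (charFormula_of_eval hα hu)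
    _ ≤ d + minDeg T β δ := by rw [zero_add]; exact minDeg_le_add_of_derives hT h
    _ ≤ d + w.potential δ := add_le_add le_rfl (minDeg_le_of_forall_world hT hβ hmax)

end World

noncomputable def canonicalEval (T : Set GradedImp) (V : Finset ℕ) (δ : BForm) (ε : ℝ≥0∞)
    (hε : 0 < ε) :
    Evaluation
      (LAEModel.full (Quasimetric.ofPotential (World.potential (T := T) (V := V) δ) ε hε)) :=
  Evaluation.ofAssignment _ fun u => extend u.1

section canonicalEval

variable {T : Set GradedImp} {V : Finset ℕ} {α β δ : BForm} {d : NNReal} {ε : ℝ≥0∞} {hε : 0 < ε}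

theorem canonicalEval_satisfies (hT : T.Finite) {Ψ : GradedImp} (hΨ : Derives T Ψ)
    (hV : Ψ.vars ⊆ V) (hdeg : Ψ.deg = 0 ∨ ε ≤ Ψ.deg) : Satisfies (canonicalEval T V δ ε hε) Ψ := by
  obtain ⟨α, d, β⟩ := Ψ
  have hα : α.vars ⊆ V := Finset.subset_union_left.trans hV
  have hβ : β.vars ⊆ V := Finset.subset_union_right.trans hV
  intro u (hu : α.eval (extend u.1) = true)
  rcases hdeg with rfl | hεd
  · exact Quasimetric.distSet_le_of_mem _ (World.eval_of_derives_zero hα hβ hΨ u hu)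
      (((Quasimetric.ofPotential _ ε hε).eq_zero_iff u u).2 rfl).le
  · obtain ⟨w, hw, hle⟩ := World.exists_potential_le_add hT hα hβ hΨ u hu
    exact Quasimetric.distSet_le_of_mem _ hw (Quasimetric.ofPotential_le (hε := hε) hεd hle)

theorem canonicalEval_not_satisfies (hT : T.Finite) (hβ : β.vars ⊆ V) {u : World T V}
    (hu : α.eval (extend u.1) = true) (hnd : ¬ Derives T ⟨charFormula u.1, d, β⟩) :
    ¬ Satisfies (canonicalEval T V β ε hε) ⟨α, d, β⟩ := by
  intro hsat
  have hlt : (d : ℝ≥0∞) < u.potential β := not_le.1 ((derives_iff_minDeg_le hT).not.1 hnd)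
  refine (hsat hu).not_gt (hlt.trans_le (le_iInf₂ fun w hw => ?_))
  have hw₀ : w.potential β = 0 := nonpos_iff_eq_zero.1 <| by
    simpa [World.potential] using (derives_iff_minDeg_le hT).1 (Derives.charFormula_of_eval hβ hw)
  calc u.potential β = u.potential β - w.potential β := by rw [hw₀, tsub_zero]
    _ ≤ _ := Quasimetric.tsub_le_ofPotential (hε := hε) u w

end canonicalEval

theorem exists_pos_le_pos_deg {T : Set GradedImp} (hT : T.Finite) :
    ∃ ε : NNReal, 0 < ε ∧ ∀ Ψ ∈ T, 0 < Ψ.deg → ε ≤ Ψ.deg := by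
  let S := insert 1 (GradedImp.deg '' {Ψ ∈ T | 0 < Ψ.deg})
  obtain ⟨ε, hεS, hmin⟩ :=
    S.exists_min_image id (((hT.sep _).image _).insert 1) (Set.insert_nonempty _ _)
  refine ⟨ε, ?_, fun Ψ hΨ hd => hmin _ (.inr ⟨Ψ, ⟨hΨ, hd⟩, rfl⟩)⟩
  rcases hεS with rfl | ⟨Ψ, ⟨-, hd⟩, rfl⟩
  exacts [one_pos, hd]

theorem completeness_minSpace_countermodel (T : Set GradedImp) (hT : T.Finite)
    (Φ : GradedImp) (h : ¬ Derives T Φ) :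
    ∃ (W : Type) (_ : Nonempty W) (M : LAEModel W) (e : Evaluation M),
      M.Q.IsMinSpace ∧ (∀ Ψ ∈ T, Satisfies e Ψ) ∧ ¬ Satisfies e Φ := by
  obtain ⟨α₀, d₀, β₀⟩ := Φ
  obtain ⟨V, hV⟩ := ((hT.insert ⟨α₀, d₀, β₀⟩).image GradedImp.vars).bddAbove
  have hΦV : α₀.vars ∪ β₀.vars ⊆ V := hV ⟨_, Set.mem_insert _ _, rfl⟩
  obtain ⟨u₀, hu₀, hnd⟩ :=
    World.exists_not_derives (T := T) (Finset.subset_union_left.trans hΦV) h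
  obtain ⟨ε, hε, hεT⟩ := exists_pos_le_pos_deg hT
  refine ⟨World T V, ⟨u₀⟩, _, canonicalEval T V β₀ ε (ENNReal.coe_pos.2 hε),
    Quasimetric.isMinSpace_of_finite _, fun Ψ hΨ => ?_,
    canonicalEval_not_satisfies hT (Finset.subset_union_right.trans hΦV) hu₀ hnd⟩
  refine canonicalEval_satisfies hT (.ax hΨ) (hV ⟨Ψ, Set.mem_insert_of_mem _ hΨ, rfl⟩) ?_
  exact (eq_zero_or_pos Ψ.deg).imp id fun hd => ENNReal.coe_le_coe.2 (hεT Ψ hΨ hd)
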